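/- Let γ₃(𝓑) = [[𝓑, 𝓑], 𝓑] be the third term of the lower central series of the Basilica group 𝓑. Then the quotient 𝓑/γ₃(𝓑) is isomorphic to the discrete Heisenberg group H₃(ℤ), the group of 3×3 upper triangular integer matrices with all diagonal entries equal to 1. -/

import Mathlib

open Equiv

namespace PaperDefs


/-! ### Regular rooted trees `X*` (vertices = finite words = lists) -/

variable (X : Type)

/-- The automorphism group of the regular rooted tree `X*`: permutations of the
set of finite words preserving the prefix relation. -/
def treeAutL : Subgroup (Perm (List X)) where
  carrier := {g | ∀ v w : List X, v <+: w ↔ g v <+: g w}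
  one_mem' := by intro v w; simp
  mul_mem' := by
    intro a b ha hb v w
    simpa [Equiv.Perm.mul_apply] using (hb v w).trans (ha (b v) (b w))
  inv_mem' := by
    intro a ha v w
    simpa using (ha (a⁻¹ v) (a⁻¹ w)).symm

/-- The rigid stabiliser of the vertex `v ∈ X*` in `H`. -/
def ristL (H : Subgroup (Perm (List X))) (v : List X) : Subgroup (Perm (List X)) where
  carrier := {g | g ∈ H ∧ ∀ w, ¬ v <+: w → g w = w}
  one_mem' := ⟨H.one_mem, fun w _ => by simp⟩
  mul_mem' := by
    rintro a b ⟨haG, ha⟩ ⟨hbG, hb⟩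
    refine ⟨H.mul_mem haG hbG, fun w hw => ?_⟩
    simp [Equiv.Perm.mul_apply, hb w hw, ha w hw]
  inv_mem' := by
    rintro a ⟨haG, ha⟩
    refine ⟨H.inv_mem haG, fun w hw => ?_⟩
    conv_lhs => rw [← ha w hw]
    simp

/-- The rigid stabiliser of the `n`-th level. -/
def ristLevelL (H : Subgroup (Perm (List X))) (n : ℕ) : Subgroup (Perm (List X)) :=
  ⨆ (v : List X) (_ : v.length = n), ristL X H v

/-- Spherically transitive action on `X*`. -/
def SphTransL (G : Subgroup (Perm (List X))) : Prop :=
  ∀ v w : List X, v.length = w.length → ∃ g ∈ G, g v = w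

/-- `G ≤ Aut(X*)` is a weakly branch group. -/
def IsWeaklyBranchL (G : Subgroup (Perm (List X))) : Prop :=
  G ≤ treeAutL X ∧ SphTransL X G ∧ ∀ v : List X, ristL X G v ≠ ⊥

/-- `projL X v H = φ_v(St_H(v))`: the image under the projection `φ_v` of the
stabiliser of `v` in `H`, where the subtree at `v` is identified with `X*` itself;
it consists of those `σ` for which some `g ∈ H` satisfies `g (v·w) = v·(σ w)`
for every word `w`. -/
def projL (v : List X) (H : Subgroup (Perm (List X))) : Subgroup (Perm (List X)) where
  carrier := {σ | ∃ g ∈ H, ∀ w : List X, g (v ++ w) = v ++ σ w}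
  one_mem' := ⟨1, H.one_mem, fun w => by simp⟩
  mul_mem' := by
    rintro σ τ ⟨g, hgH, hg⟩ ⟨g', hg'H, hg'⟩
    exact ⟨g * g', H.mul_mem hgH hg'H, fun w => by
      simp [Equiv.Perm.mul_apply, hg' w, hg (τ w)]⟩
  inv_mem' := by
    rintro σ ⟨g, hgH, hg⟩
    refine ⟨g⁻¹, H.inv_mem hgH, fun w => ?_⟩
    have h1 : g (v ++ σ⁻¹ w) = v ++ w := by
      rw [hg (σ⁻¹ w)]; simp
    calc g⁻¹ (v ++ w) = g⁻¹ (g (v ++ σ⁻¹ w)) := by rw [h1]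
      _ = v ++ σ⁻¹ w := by simp

/-- `G ≤ Aut(X*)` is self-similar: `G_v ≤ G` for every vertex. -/
def SelfSimilarL (G : Subgroup (Perm (List X))) : Prop :=
  ∀ v : List X, projL X v G ≤ G

/-! ### The Basilica group -/

mutual
  /-- The generator `a` of the Basilica group, as a function on words. -/
  def aF : List Bool → List Bool
    | [] => []
    | false :: w => false :: w
    | true :: w => true :: bF w
  /-- The generator `b` of the Basilica group, as a function on words. -/
  def bF : List Bool → List Bool
    | [] => []
    | false :: w => true :: aF w
    | true :: w => false :: w
end

mutual
  /-- The inverse of `aF`. -/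
  def aI : List Bool → List Bool
    | [] => []
    | false :: w => false :: w
    | true :: w => true :: bI w
  /-- The inverse of `bF`. -/
  def bI : List Bool → List Bool
    | [] => []
    | false :: w => true :: w
    | true :: w => false :: aI w
end

mutual
  theorem aI_aF : ∀ w, aI (aF w) = w
    | [] => rfl
    | false :: _ => rfl
    | true :: w => by simp [aF, aI, bI_bF w]
  theorem bI_bF : ∀ w, bI (bF w) = w
    | [] => rfl
    | false :: w => by simp [bF, bI, aI_aF w]
    | true :: _ => rfl
end

mutual
  theorem aF_aI : ∀ w, aF (aI w) = w
    | [] => rfl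
    | false :: _ => rfl
    | true :: w => by simp [aI, aF, bF_bI w]
  theorem bF_bI : ∀ w, bF (bI w) = w
    | [] => rfl
    | false :: _ => by simp [bI, bF]
    | true :: w => by simp [bI, bF, aF_aI w]
end

/-- The generator `a` of the Basilica group. -/
def aP : Perm (List Bool) := ⟨aF, aI, aI_aF, aF_aI⟩

/-- The generator `b` of the Basilica group. -/
def bP : Perm (List Bool) := ⟨bF, bI, bI_bF, bF_bI⟩

/-- The Basilica group `𝓑 = ⟨a, b⟩ ≤ Aut({0,1}*)`. -/
def BasilicaGroup : Subgroup (Perm (List Bool)) := Subgroup.closure {aP, bP}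

/-- The image of a subgroup of the first-level stabiliser under
`ψ₁ = (φ₀, φ₁)`: pairs `(σ₀, σ₁)` arising as the pair of first-level sections of
some `g ∈ H`. -/
def psi1Image (H : Subgroup (Perm (List Bool))) :
    Subgroup (Perm (List Bool) × Perm (List Bool)) where
  carrier := {p | ∃ g ∈ H, ∀ w : List Bool,
      g (false :: w) = false :: p.1 w ∧ g (true :: w) = true :: p.2 w}
  one_mem' := ⟨1, H.one_mem, fun w => by simp⟩
  mul_mem' := by
    rintro p q ⟨g, hgH, hg⟩ ⟨g', hg'H, hg'⟩
    refine ⟨g * g', H.mul_mem hgH hg'H, fun w => ⟨?_, ?_⟩⟩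
    · simp [Equiv.Perm.mul_apply, (hg' w).1, (hg (q.1 w)).1]
    · simp [Equiv.Perm.mul_apply, (hg' w).2, (hg (q.2 w)).2]
  inv_mem' := by
    rintro p ⟨g, hgH, hg⟩
    refine ⟨g⁻¹, H.inv_mem hgH, fun w => ⟨?_, ?_⟩⟩
    · have h1 : g (false :: p.1⁻¹ w) = false :: w := by
        rw [(hg (p.1⁻¹ w)).1]; simp
      have h2 : g⁻¹ (false :: w) = false :: p.1⁻¹ w := by
        rw [← h1]; simp
      simpa using h2
    · have h1 : g (true :: p.2⁻¹ w) = true :: w := by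
        rw [(hg (p.2⁻¹ w)).2]; simp
      have h2 : g⁻¹ (true :: w) = true :: p.2⁻¹ w := by
        rw [← h1]; simp
      simpa using h2



/-- The discrete Heisenberg group: the group of 3×3 upper triangular integer
matrices with all diagonal entries equal to 1 (as a subgroup of the units of
the matrix ring). -/
def Heisenberg : Subgroup (Matrix (Fin 3) (Fin 3) ℤ)ˣ where
  carrier := {u | (∀ i : Fin 3, (u : Matrix (Fin 3) (Fin 3) ℤ) i i = 1) ∧
      ∀ i j : Fin 3, (j : ℕ) < (i : ℕ) → (u : Matrix (Fin 3) (Fin 3) ℤ) i j = 0}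
  one_mem' := by
    constructor
    · intro i; simp [Matrix.one_apply]
    · intro i j h
      have hij : i ≠ j := Fin.ne_of_val_ne (by omega)
      simp [Matrix.one_apply, hij]
  mul_mem' := by
    rintro u v ⟨hu1, hu2⟩ ⟨hv1, hv2⟩
    constructor
    · intro i
      fin_cases i <;>
        simp [Units.val_mul, Matrix.mul_apply, Fin.sum_univ_three,
          hu1 0, hu1 1, hu1 2, hv1 0, hv1 1, hv1 2,
          hu2 1 0 (by norm_num), hu2 2 0 (by norm_num), hu2 2 1 (by norm_num),
          hv2 1 0 (by norm_num), hv2 2 0 (by norm_num), hv2 2 1 (by norm_num)]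
    · intro i j h
      fin_cases i <;> fin_cases j <;> simp at h ⊢ <;>
        simp [Units.val_mul, Matrix.mul_apply, Fin.sum_univ_three,
          hu1 0, hu1 1, hu1 2, hv1 0, hv1 1, hv1 2,
          hu2 1 0 (by norm_num), hu2 2 0 (by norm_num), hu2 2 1 (by norm_num),
          hv2 1 0 (by norm_num), hv2 2 0 (by norm_num), hv2 2 1 (by norm_num)]
  inv_mem' := by
    rintro u ⟨hu1, hu2⟩
    have h1 : (↑u : Matrix (Fin 3) (Fin 3) ℤ) *
        !![1, -(↑u : Matrix (Fin 3) (Fin 3) ℤ) 0 1,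
            (↑u : Matrix (Fin 3) (Fin 3) ℤ) 0 1 * (↑u : Matrix (Fin 3) (Fin 3) ℤ) 1 2 -
              (↑u : Matrix (Fin 3) (Fin 3) ℤ) 0 2;
          0, 1, -(↑u : Matrix (Fin 3) (Fin 3) ℤ) 1 2;
          0, 0, 1] = 1 := by
      ext i j
      fin_cases i <;> fin_cases j <;>
        simp [Matrix.mul_apply, Fin.sum_univ_three, Matrix.one_apply,
          hu1 0, hu1 1, hu1 2,
          Matrix.vecHead, Matrix.vecTail,
          hu2 1 0 (by norm_num), hu2 2 0 (by norm_num), hu2 2 1 (by norm_num)] <;> ring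
    have h2 : (↑u⁻¹ : Matrix (Fin 3) (Fin 3) ℤ) = _ := Units.inv_eq_of_mul_eq_one_right h1
    constructor
    · intro i
      rw [h2]
      fin_cases i <;> simp
    · intro i j h
      rw [h2]
      fin_cases i <;> fin_cases j <;>
        simp [Matrix.vecHead, Matrix.vecTail] at h ⊢


/-- `γ₃(𝓑) = [[𝓑,𝓑],𝓑]`, the third term of the lower central series of the
Basilica group (inside the group `𝓑` itself). -/
def gamma3Basilica : Subgroup ↥BasilicaGroup :=
  ⁅(⁅(⊤ : Subgroup ↥BasilicaGroup), (⊤ : Subgroup ↥BasilicaGroup)⁆),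
    (⊤ : Subgroup ↥BasilicaGroup)⁆

instance : gamma3Basilica.Normal := by
  unfold gamma3Basilica
  infer_instance


/-!
Sending `a ↦ x` and `b ↦ y` defines a homomorphism from `𝓑` onto the Heisenberg group `H₃(ℤ)`,
i.e. every relation `w` of `𝓑` holds in `H₃(ℤ)`. This is proved by strong induction on the length
of `w`. A relation fixes the first level, so it lies in `⟨a, b a b⁻¹, b²⟩`, where the image of `w`
in `H₃(ℤ)` is a function of the images of its two sections; these are again relations, and both are
shorter than `w` unless `w` is conjugate to a power of `a`, which has infinite order.

As `H₃(ℤ)` has class two, this homomorphism factors through `𝓑/γ₃(𝓑)`. Conversely, commutators are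
central in `𝓑/γ₃(𝓑)`, so the normal form `y ^ n * x ^ m * ⁅x⁻¹, y⁻¹⁆ ^ p` gives a homomorphism
back, and the two maps are mutually inverse.
-/

open scoped commutatorElement

section ClassTwo

variable {G Q : Type*} [Group G] [Group Q]

lemma commutator_commutator_le_ker (f : G →* Q) (hQ : ∀ g h : Q, ⁅g, h⁆ ∈ Subgroup.center Q) :
    ⁅⁅(⊤ : Subgroup G), (⊤ : Subgroup G)⁆, (⊤ : Subgroup G)⁆ ≤ f.ker := by
  have hcen : ⁅(⊤ : Subgroup G), ⊤⁆ ≤ (Subgroup.center Q).comap f :=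
    Subgroup.commutator_le.mpr fun g _ h _ => by
      simpa only [Subgroup.mem_comap, map_commutatorElement] using hQ (f g) (f h)
  refine Subgroup.commutator_le.mpr fun g hg h _ => ?_
  rw [MonoidHom.mem_ker, map_commutatorElement, commutatorElement_eq_one_iff_commute]
  exact (Subgroup.mem_center_iff.mp (hcen hg) (f h)).symm

lemma commutatorElement_mem_center_quotient {N : Subgroup G} [N.Normal]
    (hN : ⁅⁅(⊤ : Subgroup G), (⊤ : Subgroup G)⁆, (⊤ : Subgroup G)⁆ ≤ N) (g h : G ⧸ N) :
    ⁅g, h⁆ ∈ Subgroup.center (G ⧸ N) := by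
  induction g using QuotientGroup.induction_on with | H g => ?_
  induction h using QuotientGroup.induction_on with | H h => ?_
  refine Subgroup.mem_center_iff.mpr fun q => ?_
  induction q using QuotientGroup.induction_on with | H q => ?_
  have := (QuotientGroup.eq_one_iff (N := N) ⁅⁅g, h⁆, q⁆).mpr <| hN <|
    Subgroup.commutator_mem_commutator
      (Subgroup.commutator_mem_commutator (Subgroup.mem_top g) (Subgroup.mem_top h))
      (Subgroup.mem_top q)
  refine (commutatorElement_eq_one_iff_mul_comm.mp ?_).symm
  simpa only [commutatorElement_def, QuotientGroup.mk_mul, QuotientGroup.mk_inv] using this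

lemma zpow_mul_zpow_of_mem_center {A B : Q} (hC : ⁅A⁻¹, B⁻¹⁆ ∈ Subgroup.center Q) (m n : ℤ) :
    A ^ m * B ^ n = B ^ n * A ^ m * ⁅A⁻¹, B⁻¹⁆ ^ (m * n) := by
  set C := ⁅A⁻¹, B⁻¹⁆
  have hC : ∀ (g : Q) (k : ℤ), Commute g (C ^ k) := fun g k =>
    Commute.zpow_right (Subgroup.mem_center_iff.mp hC g) k
  -- `B⁻¹ A B = A C` with `C` central; raise this to the power `m`, then swap the roles of `A`, `B`.
  have hB : SemiconjBy B (A * C) A := by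
    simp only [SemiconjBy, C, commutatorElement_def]; group
  have hA : SemiconjBy (A ^ m) B (B * C ^ m) := by
    have := hB.zpow_right m
    rw [SemiconjBy, (by simpa using hC A 1 : Commute A C).mul_zpow, (hC (A ^ m) m).eq,
      ← mul_assoc] at this
    exact this.symm
  have := hA.zpow_right n
  rw [SemiconjBy, (hC B m).mul_zpow, ← zpow_mul] at this
  rw [this, mul_assoc, mul_assoc, (hC (A ^ m) (m * n)).eq]

end ClassTwo

/-- `⟨x, y, z⟩` stands for the matrix `!![1, x, z; 0, 1, y; 0, 0, 1]`. -/
@[ext] structure Heis where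
  x : ℤ
  y : ℤ
  z : ℤ

namespace Heis

instance : Mul Heis := ⟨fun g h => ⟨g.x + h.x, g.y + h.y, g.z + h.z + g.x * h.y⟩⟩
instance : One Heis := ⟨⟨0, 0, 0⟩⟩
instance : Inv Heis := ⟨fun g => ⟨-g.x, -g.y, -g.z + g.x * g.y⟩⟩

@[simp] lemma mul_x (g h : Heis) : (g * h).x = g.x + h.x := rfl
@[simp] lemma mul_y (g h : Heis) : (g * h).y = g.y + h.y := rfl
@[simp] lemma mul_z (g h : Heis) : (g * h).z = g.z + h.z + g.x * h.y := rfl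
@[simp] lemma one_x : (1 : Heis).x = 0 := rfl
@[simp] lemma one_y : (1 : Heis).y = 0 := rfl
@[simp] lemma one_z : (1 : Heis).z = 0 := rfl
@[simp] lemma inv_x (g : Heis) : g⁻¹.x = -g.x := rfl
@[simp] lemma inv_y (g : Heis) : g⁻¹.y = -g.y := rfl
@[simp] lemma inv_z (g : Heis) : g⁻¹.z = -g.z + g.x * g.y := rfl

instance : Group Heis where
  mul_assoc _ _ _ := by ext <;> simp <;> ring
  one_mul _ := by ext <;> simp
  mul_one _ := by ext <;> simp
  inv_mul_cancel _ := by ext <;> simp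

def gx : Heis := ⟨1, 0, 0⟩
def gy : Heis := ⟨0, 1, 0⟩

lemma commutatorElement_mem_center (g h : Heis) : ⁅g, h⁆ ∈ Subgroup.center Heis :=
  Subgroup.mem_center_iff.mpr fun _ => by
    ext <;> simp only [commutatorElement_def, mul_x, mul_y, mul_z, inv_x, inv_y, inv_z] <;> ring

lemma gx_zpow (k : ℤ) : gx ^ k = ⟨k, 0, 0⟩ := by
  induction k using Int.induction_on with
  | zero => rfl
  | succ n ih => rw [zpow_add_one, ih]; ext <;> simp [gx]
  | pred n ih => rw [zpow_sub_one, ih]; ext <;> simp [gx]; ring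

lemma gy_zpow (k : ℤ) : gy ^ k = ⟨0, k, 0⟩ := by
  induction k using Int.induction_on with
  | zero => rfl
  | succ n ih => rw [zpow_add_one, ih]; ext <;> simp [gy]
  | pred n ih => rw [zpow_sub_one, ih]; ext <;> simp [gy]; ring

lemma commutatorElement_zpow (k : ℤ) : ⁅gx⁻¹, gy⁻¹⁆ ^ k = ⟨0, 0, k⟩ := by
  induction k using Int.induction_on with
  | zero => rfl
  | succ n ih => rw [zpow_add_one, ih]; ext <;> simp [gx, gy, commutatorElement_def]
  | pred n ih => rw [zpow_sub_one, ih]; ext <;> simp [gx, gy, commutatorElement_def]; ring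

lemma gy_zpow_mul_gx_zpow_mul_commutatorElement_zpow (g : Heis) :
    gy ^ g.y * gx ^ g.x * ⁅gx⁻¹, gy⁻¹⁆ ^ g.z = g := by
  rw [gx_zpow, gy_zpow, commutatorElement_zpow]; ext <;> simp

section lift

variable {Q : Type*} [Group Q] (A B : Q) (hC : ⁅A⁻¹, B⁻¹⁆ ∈ Subgroup.center Q)

/-- `Heis` is the free nilpotent group of class two on `gx` and `gy`: the map `gx ↦ A`, `gy ↦ B` is
read off the normal form of `gy_zpow_mul_gx_zpow_mul_commutatorElement_zpow`. -/
def lift : Heis →* Q where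
  toFun g := B ^ g.y * A ^ g.x * ⁅A⁻¹, B⁻¹⁆ ^ g.z
  map_one' := by simp
  map_mul' g h := by
    have hAB := zpow_mul_zpow_of_mem_center hC g.x h.y
    have hC' : ∀ (q : Q) (k : ℤ), ⁅A⁻¹, B⁻¹⁆ ^ k * q = q * ⁅A⁻¹, B⁻¹⁆ ^ k := fun q k =>
      (Commute.zpow_right (Subgroup.mem_center_iff.mp hC q) k).eq.symm
    set C := ⁅A⁻¹, B⁻¹⁆
    clear_value C
    symm
    calc B ^ g.y * A ^ g.x * C ^ g.z * (B ^ h.y * A ^ h.x * C ^ h.z)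
        = B ^ g.y * A ^ g.x * (C ^ g.z * (B ^ h.y * A ^ h.x)) * C ^ h.z := by group
      _ = B ^ g.y * (A ^ g.x * B ^ h.y) * A ^ h.x * (C ^ g.z * C ^ h.z) := by rw [hC']; group
      _ = B ^ g.y * B ^ h.y * A ^ g.x * (C ^ (g.x * h.y) * A ^ h.x) * (C ^ g.z * C ^ h.z) := by
        rw [hAB]; group
      _ = B ^ (g.y + h.y) * A ^ (g.x + h.x) * C ^ (g.z + h.z + g.x * h.y) := by rw [hC']; group

lemma lift_apply (g : Heis) : lift A B hC g = B ^ g.y * A ^ g.x * ⁅A⁻¹, B⁻¹⁆ ^ g.z := rfl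

@[simp] lemma lift_gx : lift A B hC gx = A := by simp [lift_apply, gx]

@[simp] lemma lift_gy : lift A B hC gy = B := by simp [lift_apply, gy]

end lift

def toMatrix (g : Heis) : Matrix (Fin 3) (Fin 3) ℤ := !![1, g.x, g.z; 0, 1, g.y; 0, 0, 1]

lemma toMatrix_mul (g h : Heis) : toMatrix (g * h) = toMatrix g * toMatrix h := by
  ext i j
  fin_cases i <;> fin_cases j <;> simp [toMatrix, Matrix.mul_apply, Fin.sum_univ_three] <;> ring

lemma toMatrix_one : toMatrix 1 = 1 := by
  ext i j; fin_cases i <;> fin_cases j <;> simp [toMatrix]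

def toUnits : Heis →* (Matrix (Fin 3) (Fin 3) ℤ)ˣ where
  toFun g := ⟨toMatrix g, toMatrix g⁻¹, by rw [← toMatrix_mul, mul_inv_cancel, toMatrix_one],
    by rw [← toMatrix_mul, inv_mul_cancel, toMatrix_one]⟩
  map_one' := Units.ext toMatrix_one
  map_mul' g h := Units.ext (toMatrix_mul g h)

lemma toUnits_injective : Function.Injective toUnits := fun g h hgh => by
  have hgh := congrArg Units.val hgh
  ext
  · simpa [toUnits, toMatrix] using congrFun (congrFun hgh 0) 1
  · simpa [toUnits, toMatrix] using congrFun (congrFun hgh 1) 2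
  · simpa [toUnits, toMatrix] using congrFun (congrFun hgh 0) 2

lemma range_toUnits : toUnits.range = Heisenberg := by
  ext u
  constructor
  · rintro ⟨g, rfl⟩
    refine ⟨fun i => ?_, fun i j hij => ?_⟩
    · fin_cases i <;> simp [toUnits, toMatrix]
    · fin_cases i <;> fin_cases j <;> simp at hij <;> simp [toUnits, toMatrix]
  · rintro ⟨hdiag, hlow⟩
    refine ⟨⟨u.val 0 1, u.val 1 2, u.val 0 2⟩, Units.ext ?_⟩
    ext i j
    fin_cases i <;> fin_cases j <;>
      simp [toUnits, toMatrix, hdiag, hlow 1 0 (by simp), hlow 2 0 (by simp), hlow 2 1 (by simp)]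

noncomputable def mulEquivHeisenberg : Heis ≃* Heisenberg :=
  (MonoidHom.ofInjective toUnits_injective).trans (MulEquiv.subgroupCongr range_toUnits)

end Heis

/-- The wreath product `G ≀ C₂`: the two first-level sections, indexed by the letter they act below,
and the root permutation, `swap = true` meaning that the two letters are exchanged. -/
@[ext] structure Wr (G : Type*) where
  sec : Bool → G
  swap : Bool

namespace Wr

variable {G H : Type*} [Group G] [Group H]

instance : Mul (Wr G) := ⟨fun g h => ⟨fun x => g.sec (xor x h.swap) * h.sec x, xor g.swap h.swap⟩⟩
instance : One (Wr G) := ⟨⟨1, false⟩⟩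
instance : Inv (Wr G) := ⟨fun g => ⟨fun x => (g.sec (xor x g.swap))⁻¹, g.swap⟩⟩

@[simp] lemma mul_sec (g h : Wr G) (x : Bool) : (g * h).sec x = g.sec (xor x h.swap) * h.sec x :=
  rfl
@[simp] lemma mul_swap (g h : Wr G) : (g * h).swap = xor g.swap h.swap := rfl
@[simp] lemma one_sec (x : Bool) : (1 : Wr G).sec x = 1 := rfl
@[simp] lemma one_swap : (1 : Wr G).swap = false := rfl
@[simp] lemma inv_sec (g : Wr G) (x : Bool) : g⁻¹.sec x = (g.sec (xor x g.swap))⁻¹ := rfl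
@[simp] lemma inv_swap (g : Wr G) : g⁻¹.swap = g.swap := rfl

instance : Group (Wr G) where
  mul_assoc _ _ _ := by ext <;> simp [mul_assoc, Bool.xor_comm, Bool.xor_left_comm]
  one_mul _ := by ext <;> simp
  mul_one _ := by ext <;> simp
  inv_mul_cancel _ := by ext <;> simp

def base : (Bool → G) →* Wr G where
  toFun s := ⟨s, false⟩
  map_one' := rfl
  map_mul' _ _ := by ext <;> simp

@[simp] lemma base_sec (s : Bool → G) (x : Bool) : (base s).sec x = s x := rfl
@[simp] lemma base_swap (s : Bool → G) : (base s).swap = false := rfl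

def map (f : G →* H) : Wr G →* Wr H where
  toFun g := ⟨fun x => f (g.sec x), g.swap⟩
  map_one' := by ext <;> simp
  map_mul' _ _ := by ext <;> simp

@[simp] lemma map_sec (f : G →* H) (g : Wr G) (x : Bool) : (map f g).sec x = f (g.sec x) := rfl
@[simp] lemma map_swap (f : G →* H) (g : Wr G) : (map f g).swap = g.swap := rfl

def act (g : Wr (Perm (List Bool))) : List Bool → List Bool
  | [] => []
  | x :: v => xor x g.swap :: g.sec x v

instance : MulAction (Wr (Perm (List Bool))) (List Bool) where
  smul := act
  one_smul v := by cases v <;> simp [HSMul.hSMul, act]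
  mul_smul g h v := by
    cases v <;> simp [HSMul.hSMul, act, Bool.xor_comm, Bool.xor_left_comm, Perm.mul_apply]

def toPerm : Wr (Perm (List Bool)) →* Perm (List Bool) := MulAction.toPermHom _ _

@[simp] lemma toPerm_cons (g : Wr (Perm (List Bool))) (x : Bool) (v : List Bool) :
    toPerm g (x :: v) = xor x g.swap :: g.sec x v := rfl

lemma toPerm_injective : Function.Injective toPerm := by
  refine (injective_iff_map_eq_one _).mpr fun g hg => ?_
  have hfix : ∀ x v, xor x g.swap :: g.sec x v = x :: v := fun x v => by
    rw [← toPerm_cons, hg, Perm.one_apply]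
  refine Wr.ext (funext fun x => Equiv.ext fun v => (List.cons.inj (hfix x v)).2) ?_
  simpa using (List.cons.inj (hfix false [])).1

lemma toPerm_eq_one_iff {g : Wr (Perm (List Bool))} : toPerm g = 1 ↔ g = 1 :=
  (injective_iff_map_eq_one' _).mp toPerm_injective g

end Wr

lemma aP_eq_toPerm : aP = Wr.toPerm (Wr.base fun x => cond x bP 1) := by
  ext (_ | ⟨_ | _, v⟩) <;> rfl

lemma bP_eq_toPerm : bP = Wr.toPerm ⟨fun x => cond x 1 aP, true⟩ := by
  ext (_ | ⟨_ | _, v⟩) <;> rfl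

lemma bP_sq_eq_toPerm : bP ^ 2 = Wr.toPerm (Wr.base fun _ => aP) := by
  ext (_ | ⟨_ | _, v⟩) <;> rfl

lemma bP_zpow_eq_one_of_aP_zpow_eq_one {k : ℤ} (h : aP ^ k = 1) : bP ^ k = 1 := by
  rw [aP_eq_toPerm, ← map_zpow, ← map_zpow, Wr.toPerm_eq_one_iff] at h
  simpa [Wr.base] using congrFun (congrArg Wr.sec h) true

lemma exists_aP_zpow_eq_one_of_bP_zpow_eq_one {k : ℤ} (h : bP ^ k = 1) :
    ∃ j, k = 2 * j ∧ aP ^ j = 1 := by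
  obtain ⟨j, rfl | rfl⟩ := Int.even_or_odd' k
  · rw [zpow_mul, zpow_two, ← pow_two, bP_sq_eq_toPerm, ← map_zpow, ← map_zpow,
      Wr.toPerm_eq_one_iff] at h
    exact ⟨j, rfl, by simpa [Wr.base] using congrFun (congrArg Wr.sec h) false⟩
  · rw [zpow_add_one, zpow_mul, zpow_two, ← pow_two, bP_sq_eq_toPerm, bP_eq_toPerm, ← map_zpow,
      ← map_zpow, ← map_mul, Wr.toPerm_eq_one_iff] at h
    simpa [Wr.base] using congrArg Wr.swap h

theorem aP_zpow_eq_one_iff {k : ℤ} : aP ^ k = 1 ↔ k = 0 := by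
  refine ⟨fun h => ?_, fun h => h ▸ zpow_zero aP⟩
  induction hn : k.natAbs using Nat.strong_induction_on generalizing k with
  | _ n ih =>
    obtain ⟨j, rfl, hj⟩ :=
      exists_aP_zpow_eq_one_of_bP_zpow_eq_one (bP_zpow_eq_one_of_aP_zpow_eq_one h)
    obtain rfl | hj0 := eq_or_ne j 0
    · rfl
    · exact absurd (ih j.natAbs (by omega) hj rfl) hj0

lemma mk_cons {α : Type*} (p : α × Bool) (l : List (α × Bool)) :
    FreeGroup.mk (p :: l) = cond p.2 (.of p.1) (.of p.1)⁻¹ * FreeGroup.mk l := by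
  obtain ⟨g, _ | _⟩ := p <;>
    simp [FreeGroup.mul_mk, FreeGroup.of, FreeGroup.inv_mk, FreeGroup.invRev]

inductive Gen
  | a
  | b
  deriving DecidableEq

open FreeGroup (of)

def basilicaHom : FreeGroup Gen →* Perm (List Bool) :=
  FreeGroup.lift fun | .a => aP | .b => bP

def heisHom : FreeGroup Gen →* Heis :=
  FreeGroup.lift fun | .a => Heis.gx | .b => Heis.gy

/-- The wreath recursion `ψ₁(a) = (1, b)`, `ψ₁(b) = σ(a, 1)`, on the free group. -/
def sectionHom : FreeGroup Gen →* Wr (FreeGroup Gen) :=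
  FreeGroup.lift fun
    | .a => Wr.base fun x => cond x (of .b) 1
    | .b => ⟨fun x => cond x 1 (of .a), true⟩

@[simp] lemma basilicaHom_a : basilicaHom (of .a) = aP := FreeGroup.lift_apply_of
@[simp] lemma basilicaHom_b : basilicaHom (of .b) = bP := FreeGroup.lift_apply_of
@[simp] lemma heisHom_a : heisHom (of .a) = Heis.gx := FreeGroup.lift_apply_of
@[simp] lemma heisHom_b : heisHom (of .b) = Heis.gy := FreeGroup.lift_apply_of
@[simp] lemma sectionHom_a : sectionHom (of .a) = Wr.base fun x => cond x (of .b) 1 :=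
  FreeGroup.lift_apply_of
@[simp] lemma sectionHom_b : sectionHom (of .b) = ⟨fun x => cond x 1 (of .a), true⟩ :=
  FreeGroup.lift_apply_of

lemma basilicaHom_eq_toPerm_comp :
    basilicaHom = Wr.toPerm.comp ((Wr.map basilicaHom).comp sectionHom) := by
  refine FreeGroup.ext_hom _ _ fun g => ?_
  cases g
  · simp only [MonoidHom.comp_apply, basilicaHom_a, sectionHom_a, aP_eq_toPerm]
    congr 1; ext x : 2 <;> simp; cases x <;> rfl
  · simp only [MonoidHom.comp_apply, basilicaHom_b, sectionHom_b, bP_eq_toPerm]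
    congr 1; ext x : 2 <;> simp; cases x <;> rfl

lemma map_sectionHom_eq_one {w : FreeGroup Gen} (hw : basilicaHom w = 1) :
    Wr.map basilicaHom (sectionHom w) = 1 := by
  rwa [basilicaHom_eq_toPerm_comp, MonoidHom.comp_apply, Wr.toPerm_eq_one_iff] at hw

lemma norm_sec_add_norm_sec_of_le_one (g : Gen) (s : Bool) :
    ((sectionHom (cond s (of g) (of g)⁻¹)).sec false).norm +
      ((sectionHom (cond s (of g) (of g)⁻¹)).sec true).norm ≤ 1 := by
  cases g <;> cases s <;> simp [FreeGroup.norm_of, FreeGroup.norm_inv_eq]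

lemma norm_sec_add_norm_sec_le_length (l : List (Gen × Bool)) :
    ((sectionHom (.mk l)).sec false).norm + ((sectionHom (.mk l)).sec true).norm ≤ l.length := by
  induction l with
  | nil => simp [← FreeGroup.one_eq_mk]
  | cons p l ih =>
    have hp := norm_sec_add_norm_sec_of_le_one p.1 p.2
    rw [mk_cons, map_mul, Wr.mul_sec, Wr.mul_sec]
    grw [FreeGroup.norm_mul_le, FreeGroup.norm_mul_le]
    cases (sectionHom (.mk l)).swap <;> simp only [Bool.xor_false, Bool.xor_true, Bool.not_false,
      Bool.not_true, List.length_cons] <;> omega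

/- Every letter feeds one letter into one of the two sections. All of them reach the section at
`true` only in the words `a ^ k` and `b⁻¹ a ^ k`, and the section at `false` only in `b⁻¹ a ^ k b`
and `a ^ k b`. -/
lemma mem_zpowers_of_length_le_norm_sec_true (l : List (Gen × Bool))
    (h : l.length ≤ ((sectionHom (.mk l)).sec true).norm) :
    cond (sectionHom (.mk l)).swap (of .b) 1 * .mk l ∈ Subgroup.zpowers (of .a) := by
  induction l with
  | nil => simp [← FreeGroup.one_eq_mk]
  | cons p l ih =>
    have hl := norm_sec_add_norm_sec_le_length l
    rw [mk_cons, map_mul, Wr.mul_sec, List.length_cons] at h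
    grw [FreeGroup.norm_mul_le] at h
    rw [mk_cons, map_mul, Wr.mul_swap]
    obtain ⟨g, s⟩ := p
    cases hY : (sectionHom (.mk l)).swap <;> simp only [hY] at h ih ⊢ <;>
      cases g <;> cases s <;>
      simp [FreeGroup.norm_of, FreeGroup.norm_inv_eq, Subgroup.mul_mem_cancel_left,
        Subgroup.mem_zpowers] at h ih ⊢ <;>
      first | omega | exact ih (by omega)

lemma mem_zpowers_of_length_le_norm_sec_false (l : List (Gen × Bool))
    (h : l.length ≤ ((sectionHom (.mk l)).sec false).norm) :
    cond (sectionHom (.mk l)).swap 1 (of .b) * .mk l * (of .b)⁻¹ ∈ Subgroup.zpowers (of .a) := by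
  induction l with
  | nil => simp [← FreeGroup.one_eq_mk]
  | cons p l ih =>
    have hl := norm_sec_add_norm_sec_le_length l
    rw [mk_cons, map_mul, Wr.mul_sec, List.length_cons] at h
    grw [FreeGroup.norm_mul_le] at h
    rw [mk_cons, map_mul, Wr.mul_swap]
    obtain ⟨g, s⟩ := p
    cases hY : (sectionHom (.mk l)).swap <;> simp only [hY] at h ih ⊢ <;>
      cases g <;> cases s <;>
      simp [FreeGroup.norm_of, FreeGroup.norm_inv_eq, Subgroup.mul_mem_cancel_left,
        Subgroup.mem_zpowers, mul_assoc] at h ih ⊢ <;>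
      first | omega | exact ih (by omega)

lemma eq_one_of_norm_le_norm_sec {w : FreeGroup Gen} (hw : basilicaHom w = 1) (x : Bool)
    (h : w.norm ≤ ((sectionHom w).sec x).norm) : w = 1 := by
  have hswap : (sectionHom w).swap = false := congrArg Wr.swap (map_sectionHom_eq_one hw)
  obtain ⟨c, hc⟩ : ∃ c, c * w * c⁻¹ ∈ Subgroup.zpowers (of .a) := by
    cases x
    · have := mem_zpowers_of_length_le_norm_sec_false w.toWord
      simp only [FreeGroup.mk_toWord, hswap] at this
      exact ⟨_, this h⟩
    · have := mem_zpowers_of_length_le_norm_sec_true w.toWord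
      simp only [FreeGroup.mk_toWord, hswap] at this
      exact ⟨1, by simpa using this h⟩
  obtain ⟨k, hk⟩ := Subgroup.mem_zpowers_iff.mp hc
  have hk0 : k = 0 := by
    rw [← aP_zpow_eq_one_iff, ← basilicaHom_a, ← map_zpow, hk]
    simp [hw]
  rwa [hk0, zpow_zero, eq_comm, conj_eq_one_iff] at hk

/-- Generators of the stabiliser of the first level, the words of even `b`-exponent; their sections
are `(1, b)`, `(b, 1)` and `(a, a)`. -/
def stabilizerGenerators : Set (FreeGroup Gen) :=
  {of .a, of .b * of .a * (of .b)⁻¹, of .b * of .b}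

lemma mem_closure_or_inv_mul_mem_closure (w : FreeGroup Gen) :
    w ∈ Subgroup.closure stabilizerGenerators ∨
      (of .b)⁻¹ * w ∈ Subgroup.closure stabilizerGenerators := by
  set H := Subgroup.closure stabilizerGenerators
  have hA : of .a ∈ H := Subgroup.subset_closure (by simp [stabilizerGenerators])
  have hC : of .b * of .a * (of .b)⁻¹ ∈ H :=
    Subgroup.subset_closure (by simp [stabilizerGenerators])
  have hB : of .b * of .b ∈ H := Subgroup.subset_closure (by simp [stabilizerGenerators])
  have hA' : (of .b)⁻¹ * of .a * of .b ∈ H := by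
    convert H.mul_mem (H.mul_mem (H.inv_mem hB) hC) hB using 1; group
  have hw : w ∈ Subgroup.closure (Set.range of) := by simp [FreeGroup.closure_range_of]
  induction hw using Subgroup.closure_induction_left with
  | one => simp
  | mul_left x hx y _ ih =>
    obtain ⟨_ | _, rfl⟩ := hx <;> rcases ih with h | h
    · exact .inl (H.mul_mem hA h)
    · exact .inr (by convert H.mul_mem hA' h using 1; group)
    · exact .inr (by simpa using h)
    · exact .inl (by convert H.mul_mem hB h using 1; group)
  | inv_mul_cancel x hx y _ ih =>
    obtain ⟨_ | _, rfl⟩ := hx <;> rcases ih with h | h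
    · exact .inl (H.mul_mem (H.inv_mem hA) h)
    · exact .inr (by convert H.mul_mem (H.inv_mem hA') h using 1; group)
    · exact .inr (by convert H.mul_mem (H.inv_mem hB) h using 1; group)
    · exact .inl h

/-- On the stabiliser of the first level, the image of `w` in `Heis` is this function of the images
of its two sections: check it on the generators `a`, `b a b⁻¹`, `b²`. It is multiplicative on pairs
with equal `x`-coordinates, which is where the sections of stabiliser elements land. -/
def heisOfSections (g h : Heis) : Heis :=
  ⟨g.y + h.y, g.x + h.x, 2 * (g.x * g.y - g.z) + 2 * (h.x * h.y - h.z) - g.y⟩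

lemma heisOfSections_mul {g h g' h' : Heis} (hg : g.x = h.x) (hg' : g'.x = h'.x) :
    heisOfSections (g * g') (h * h') = heisOfSections g h * heisOfSections g' h' := by
  obtain ⟨_, _, _⟩ := g; obtain ⟨_, _, _⟩ := h; obtain ⟨_, _, _⟩ := g'; obtain ⟨_, _, _⟩ := h'
  dsimp only at hg hg'; subst hg hg'
  ext <;> simp [heisOfSections] <;> ring

lemma heisOfSections_inv {g h : Heis} (hg : g.x = h.x) :
    heisOfSections g⁻¹ h⁻¹ = (heisOfSections g h)⁻¹ := by
  obtain ⟨_, _, _⟩ := g; obtain ⟨_, _, _⟩ := h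
  dsimp only at hg; subst hg
  ext <;> simp [heisOfSections] <;> ring

lemma heisHom_eq_heisOfSections_of_mem_closure {w : FreeGroup Gen}
    (hw : w ∈ Subgroup.closure stabilizerGenerators) :
    (sectionHom w).swap = false ∧
      (heisHom ((sectionHom w).sec false)).x = (heisHom ((sectionHom w).sec true)).x ∧
      heisHom w = heisOfSections (heisHom ((sectionHom w).sec false))
        (heisHom ((sectionHom w).sec true)) := by
  induction hw using Subgroup.closure_induction with
  | mem w hw =>
    rcases hw with rfl | rfl | rfl <;> simp [heisOfSections, Heis.gx, Heis.gy] <;> rfl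
  | one => simp [heisOfSections]; rfl
  | mul w w' _ _ ih ih' =>
    obtain ⟨hs, hx, hθ⟩ := ih
    obtain ⟨hs', hx', hθ'⟩ := ih'
    simp only [map_mul, Wr.mul_swap, Wr.mul_sec, hs, hs', Bool.xor_false]
    exact ⟨trivial, by simp [hx, hx'], by rw [hθ, hθ', heisOfSections_mul hx hx']⟩
  | inv w _ ih =>
    obtain ⟨hs, hx, hθ⟩ := ih
    simp only [map_inv, Wr.inv_swap, Wr.inv_sec, hs, Bool.xor_false]
    exact ⟨trivial, by simp [hx], by rw [hθ, heisOfSections_inv hx]⟩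

lemma mem_closure_of_swap_eq_false {w : FreeGroup Gen} (hw : (sectionHom w).swap = false) :
    w ∈ Subgroup.closure stabilizerGenerators := by
  refine (mem_closure_or_inv_mul_mem_closure w).resolve_right fun h => ?_
  have := (heisHom_eq_heisOfSections_of_mem_closure h).1
  simp [hw] at this

lemma heisHom_eq_heisOfSections {w : FreeGroup Gen} (hw : (sectionHom w).swap = false) :
    heisHom w = heisOfSections (heisHom ((sectionHom w).sec false))
      (heisHom ((sectionHom w).sec true)) :=
  (heisHom_eq_heisOfSections_of_mem_closure (mem_closure_of_swap_eq_false hw)).2.2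

theorem heisHom_eq_one_of_basilicaHom_eq_one {w : FreeGroup Gen} (hw : basilicaHom w = 1) :
    heisHom w = 1 := by
  induction hN : w.norm using Nat.strong_induction_on generalizing w with
  | _ N ih =>
    have hψ := map_sectionHom_eq_one hw
    have hsec (x : Bool) : basilicaHom ((sectionHom w).sec x) = 1 := congrFun (congrArg Wr.sec hψ) x
    by_cases hfull : ∃ x, N ≤ ((sectionHom w).sec x).norm
    · obtain ⟨x, hx⟩ := hfull
      rw [eq_one_of_norm_le_norm_sec hw x (hN ▸ hx), map_one]
    · simp only [not_exists, not_le] at hfull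
      rw [heisHom_eq_heisOfSections (congrArg Wr.swap hψ), ih _ (hfull false) (hsec false) rfl,
        ih _ (hfull true) (hsec true) rfl]
      rfl

def mulEquivHeisOfComp {Q : Type*} [Group Q] (p : FreeGroup Gen →* Q)
    (hp : Function.Surjective p) (hQ : ∀ g h : Q, ⁅g, h⁆ ∈ Subgroup.center Q) (f : Q →* Heis)
    (hf : f.comp p = heisHom) : Q ≃* Heis :=
  let ψ := Heis.lift (p (of .a)) (p (of .b)) (hQ _ _)
  have hψ : ψ.comp heisHom = p := FreeGroup.ext_hom _ _ fun g => by
    cases g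
    · rw [MonoidHom.comp_apply, heisHom_a, Heis.lift_gx]
    · rw [MonoidHom.comp_apply, heisHom_b, Heis.lift_gy]
  have hfp (w : FreeGroup Gen) : f (p w) = heisHom w := DFunLike.congr_fun hf w
  MonoidHom.toMulEquiv f ψ
    ((MonoidHom.cancel_right hp).mp <| MonoidHom.ext fun w => by
      rw [MonoidHom.comp_apply, MonoidHom.comp_apply, hfp]
      exact DFunLike.congr_fun hψ w)
    (MonoidHom.ext fun g => by
      rw [MonoidHom.comp_apply, Heis.lift_apply, map_mul, map_mul, map_zpow, map_zpow, map_zpow,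
        map_commutatorElement, map_inv, map_inv, hfp, hfp, heisHom_a, heisHom_b]
      exact Heis.gy_zpow_mul_gx_zpow_mul_commutatorElement_zpow g)

lemma range_basilicaHom : basilicaHom.range = BasilicaGroup := by
  rw [basilicaHom, FreeGroup.range_lift_eq_closure, BasilicaGroup]
  congr 1
  ext g
  constructor
  · rintro ⟨_ | _, rfl⟩ <;> simp
  · rintro (rfl | rfl)
    exacts [⟨.a, rfl⟩, ⟨.b, rfl⟩]

def toBasilica : FreeGroup Gen →* BasilicaGroup :=
  basilicaHom.codRestrict BasilicaGroup fun w => range_basilicaHom ▸ ⟨w, rfl⟩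

lemma toBasilica_surjective : Function.Surjective toBasilica := fun g => by
  obtain ⟨w, hw⟩ : (g : Perm (List Bool)) ∈ basilicaHom.range := by
    rw [range_basilicaHom]; exact g.2
  exact ⟨w, Subtype.ext hw⟩

noncomputable def basilicaToHeis : BasilicaGroup →* Heis :=
  toBasilica.liftOfSurjective toBasilica_surjective
    ⟨heisHom, fun _ hw => heisHom_eq_one_of_basilicaHom_eq_one (congrArg Subtype.val hw)⟩

lemma basilicaToHeis_toBasilica (w : FreeGroup Gen) : basilicaToHeis (toBasilica w) = heisHom w :=
  toBasilica.liftOfRightInverse_comp_apply _ _ _ w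

/-- `𝓑/γ₃(𝓑)` is isomorphic to the discrete Heisenberg group
`H₃(ℤ)` of 3×3 upper triangular integer matrices with unit diagonal. -/
theorem basilica_mod_gamma3_iso_heisenberg :
    Nonempty ((↥BasilicaGroup ⧸ gamma3Basilica) ≃* ↥Heisenberg) := by
  let f := QuotientGroup.lift gamma3Basilica basilicaToHeis
    (commutator_commutator_le_ker _ Heis.commutatorElement_mem_center)
  let p := (QuotientGroup.mk' gamma3Basilica).comp toBasilica
  have hp : Function.Surjective p := (QuotientGroup.mk'_surjective _).comp toBasilica_surjective
  have hf : f.comp p = heisHom := MonoidHom.ext basilicaToHeis_toBasilica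
  exact ⟨(mulEquivHeisOfComp p hp (commutatorElement_mem_center_quotient le_rfl) f hf).trans
    Heis.mulEquivHeisenberg⟩

end PaperDefs
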